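/- Let n and d be integers with 2 ≤ d ≤ n, and set δ = (d−1)/n. Let 𝓘(n,d−2) denote the number of vectors x ∈ 𝔽₂ⁿ satisfying d(x,u) ≤ d−2 and d(x,v) ≤ d−2, where u and v are any two fixed vectors of 𝔽₂ⁿ at Hamming distance d (for concreteness, u = 0 and v a fixed vector of weight d). Define f_GV(n,d) = 2ⁿ / V(n,d−1) and f_F₂(n,d) = (2ⁿ / V(n,d−1)) · ( V(n,d−1) + 𝓘(n,d−2) ) / V(n,d−2). Then f_F₂(n,d) / f_GV(n,d) ≤ (δ + 1)/δ. -/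

import Mathlib

open Finset

/-- Volume of a Hamming ball of radius `d` in `𝔽₂ⁿ`. -/
def V (n d : ℕ) : ℕ := ∑ i ∈ Finset.range (d + 1), n.choose i

/-- `𝓘(n,r)` relative to a vector `v`: the number of vectors within Hamming distance `r`
of both `0` and `v`. -/
noncomputable def interVol (n r : ℕ) (v : Fin n → ZMod 2) : ℕ :=
  {x : Fin n → ZMod 2 | hammingDist x 0 ≤ r ∧ hammingDist x v ≤ r}.ncard

/-- The Gilbert–Varshamov lower bound `f_GV(n,d) = 2ⁿ / V(n,d-1)`. -/
noncomputable def fGV (n d : ℕ) : ℝ := (2 : ℝ) ^ n / (V n (d - 1) : ℝ)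

/-- Fabris's second lower bound, relative to a fixed vector `v` of weight `d`. -/
noncomputable def fF2 (n d : ℕ) (v : Fin n → ZMod 2) : ℝ :=
  ((2 : ℝ) ^ n / (V n (d - 1) : ℝ)) *
    (((V n (d - 1) : ℝ) + (interVol n (d - 2) v : ℝ)) / (V n (d - 2) : ℝ))

/-!
Put `m = d - 2`; the claim is `(m + 1) (V(n, m + 1) + 𝓘) ≤ (n + m + 1) V(n, m)`. Since `v` has
weight `m + 2`, the triangle inequality keeps the lens counted by `𝓘` away from the ball of
radius `min m 1` around `0`, so `𝓘 ≤ V(n, m) - V(n, min m 1)`. What remains is an inequality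
between ball volumes, which follows from `(m + 1) C(n, m + 1) = (n - m) C(n, m)` together with
`C(n, j + 1) ≤ (n - j - 2) C(n, j)` for `1 ≤ j`, `j + 4 ≤ n` (the cases `j = 0` and `n = j + 3`
are checked directly).
-/

lemma card_hammingNorm_eq (n i : ℕ) :
    #{x : Fin n → ZMod 2 | hammingNorm x = i} = n.choose i := by
  have indicator_ne_zero (s : Finset (Fin n)) (j : Fin n) :
      (if j ∈ s then (1 : ZMod 2) else 0) ≠ 0 ↔ j ∈ s := by
    split_ifs with h <;> simp [h]
  have eq_one_of_ne_zero : ∀ a : ZMod 2, a ≠ 0 → a = 1 := by decide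
  rw [← card_fin n, ← card_powersetCard, card_fin]
  refine card_nbij' (fun x => ({j | x j ≠ 0} : Finset _)) (fun s j => if j ∈ s then 1 else 0)
    ?_ ?_ ?_ ?_
  · intro x hx
    simp only [coe_filter, mem_univ, true_and, Set.mem_ofPred_eq, mem_coe,
      mem_powersetCard] at hx ⊢
    exact ⟨subset_univ _, hx⟩
  · intro s hs
    simp only [coe_filter, mem_univ, true_and, Set.mem_ofPred_eq, mem_coe,
      mem_powersetCard] at hs ⊢
    simp only [hammingNorm, indicator_ne_zero, filter_mem_eq_inter, univ_inter, hs.2]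
  · intro x _
    funext j
    by_cases h : x j = 0 <;> simp [h, eq_one_of_ne_zero]
  · intro s _
    ext j
    simp [indicator_ne_zero]

lemma card_hammingNorm_le (n r : ℕ) :
    #{x : Fin n → ZMod 2 | hammingNorm x ≤ r} = V n r := by
  induction r with
  | zero => simpa [V] using card_hammingNorm_eq n 0
  | succ r ih =>
    simp only [Nat.le_succ_iff, filter_or]
    rw [card_union_of_disjoint (disjoint_filter.2 fun _ _ h => by omega), ih,
      card_hammingNorm_eq, V, V, sum_range_succ _ (r + 1)]

lemma V_pos (n r : ℕ) : 0 < V n r :=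
  sum_pos' (fun _ _ => Nat.zero_le _) ⟨0, by simp⟩

lemma choose_le_V (n r : ℕ) : n.choose r ≤ V n r :=
  single_le_sum (f := n.choose) (fun _ _ => Nat.zero_le _) (self_mem_range_succ r)

lemma interVol_eq_card (n r : ℕ) (v : Fin n → ZMod 2) :
    interVol n r v = #{x | hammingNorm x ≤ r ∧ hammingDist x v ≤ r} := by
  rw [interVol, ← Set.ncard_coe_finset]
  simp [hammingDist_zero_right]

lemma interVol_add_V_le {n m r : ℕ} {v : Fin n → ZMod 2} (hr : r ≤ m)
    (hv : m + r < hammingNorm v) : interVol n m v + V n r ≤ V n m := by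
  rw [interVol_eq_card, ← card_hammingNorm_le, ← card_hammingNorm_le,
    ← card_union_of_disjoint]
  · refine card_le_card fun x hx => ?_
    simp only [mem_union, mem_filter, mem_univ, true_and] at hx ⊢
    omega
  · refine disjoint_filter.2 fun x _ hlens hball => ?_
    have := hammingDist_triangle v x 0
    rw [hammingDist_zero_right, hammingDist_comm, hammingDist_zero_right] at this
    exact hv.not_ge (this.trans (add_le_add hlens.2 hball))

lemma choose_succ_le_mul_choose {n j : ℕ} (hj : 1 ≤ j) (h : j + 4 ≤ n) :
    n.choose (j + 1) ≤ (n - j - 2) * n.choose j := by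
  obtain ⟨k, rfl⟩ := Nat.exists_eq_add_of_le h
  rw [show j + 4 + k - j - 2 = k + 2 by omega]
  refine Nat.le_of_mul_le_mul_right ?_ (Nat.succ_pos j)
  calc (j + 4 + k).choose (j + 1) * (j + 1) = (j + 4 + k).choose j * (k + 4) := by
        rw [Nat.choose_succ_right_eq, show j + 4 + k - j = k + 4 by omega]
    _ ≤ (j + 4 + k).choose j * ((k + 2) * (j + 1)) := Nat.mul_le_mul_left _ (by nlinarith)
    _ = (k + 2) * (j + 4 + k).choose j * (j + 1) := by ring

lemma choose_succ_le {n j : ℕ} (h : j + 3 ≤ n) :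
    n.choose (j + 1) ≤ (n - j - 2) * V n j + (j + 2) * (n + 1) := by
  rcases Nat.eq_zero_or_pos j with rfl | hj
  · refine le_add_left ?_
    rw [Nat.choose_one_right]
    omega
  rcases h.eq_or_lt with rfl | h
  · calc (j + 3).choose (j + 1) = (j + 3).choose 2 := Nat.choose_symm_of_eq_add rfl
      _ ≤ (j + 3) * (j + 2) := by rw [Nat.choose_two_right]; exact Nat.div_le_self _ _
      _ ≤ _ := by nlinarith
  · calc n.choose (j + 1) ≤ (n - j - 2) * n.choose j := choose_succ_le_mul_choose hj h
      _ ≤ (n - j - 2) * V n j := Nat.mul_le_mul_left _ (choose_le_V n j)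
      _ ≤ _ := Nat.le_add_right _ _

lemma succ_mul_V_succ_le {n m : ℕ} (h : m + 2 ≤ n) :
    (m + 1) * V n (m + 1) ≤ n * V n m + (m + 1) * V n (min m 1) := by
  rcases m with _ | j
  · simp [V, sum_range_succ, add_comm]
  obtain ⟨k, rfl⟩ : ∃ k, n = j + 3 + k := ⟨n - j - 3, by omega⟩
  have hV (r : ℕ) : V (j + 3 + k) (r + 1) = V _ r + (j + 3 + k).choose (r + 1) :=
    sum_range_succ _ (r + 1)
  have hV1 : V (j + 3 + k) 1 = j + 3 + k + 1 := by simp [V, sum_range_succ, add_comm]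
  have hpascal := Nat.choose_succ_right_eq (j + 3 + k) (j + 1)
  have hchoose := choose_succ_le (n := j + 3 + k) (j := j) (Nat.le_add_right _ _)
  rw [show j + 3 + k - (j + 1) = k + 2 by omega] at hpascal
  rw [show j + 3 + k - j - 2 = k + 1 by omega] at hchoose
  rw [min_eq_right (by omega), hV1, hV (j + 1), hV j]
  nlinarith

lemma succ_mul_V_add_interVol_le {n m : ℕ} {v : Fin n → ZMod 2}
    (hv : hammingNorm v = m + 2) :
    (m + 1) * (V n (m + 1) + interVol n m v) ≤ (n + m + 1) * V n m := by
  have hn : m + 2 ≤ n := hv ▸ hammingNorm_le_card_fintype.trans_eq (Fintype.card_fin n)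
  have hlens := interVol_add_V_le (v := v) (min_le_left m 1) (by omega)
  have hball := succ_mul_V_succ_le hn
  nlinarith

lemma fF2_div_fGV (n d : ℕ) (v : Fin n → ZMod 2) :
    fF2 n d v / fGV n d = (V n (d - 1) + interVol n (d - 2) v) / (V n (d - 2) : ℝ) := by
  have : fGV n d ≠ 0 := div_ne_zero (by positivity) (by exact_mod_cast (V_pos n _).ne')
  rw [fF2, ← fGV, mul_div_right_comm, div_self this, one_mul]

theorem statement16_general (n d : ℕ) (hd : 2 ≤ d)
    (v : Fin n → ZMod 2) (hv : hammingNorm v = d) :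
    fF2 n d v / fGV n d ≤ (((d : ℝ) - 1) / n + 1) / (((d : ℝ) - 1) / n) := by
  obtain ⟨m, rfl⟩ := Nat.exists_eq_add_of_le' hd
  have hn : (0 : ℝ) < n := Nat.cast_pos.2 <| by
    have := hv ▸ hammingNorm_le_card_fintype.trans_eq (Fintype.card_fin n)
    omega
  have key : ((m : ℝ) + 1) * (V n (m + 1) + interVol n m v) ≤ (n + m + 1) * V n m := by
    exact_mod_cast succ_mul_V_add_interVol_le hv
  rw [fF2_div_fGV, Nat.add_sub_cancel, show m + 2 - 1 = m + 1 from rfl,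
    div_le_div_iff₀ (by exact_mod_cast V_pos n m) (div_pos (by push_cast; linarith) hn)]
  push_cast
  field_simp
  linarith

theorem statement16 (n d : ℕ) (hd : 2 ≤ d) (hdn : d ≤ n)
    (v : Fin n → ZMod 2) (hv : hammingNorm v = d) :
    fF2 n d v / fGV n d ≤ (((d : ℝ) - 1) / n + 1) / (((d : ℝ) - 1) / n) :=
  statement16_general n d hd v hv
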